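/- arXiv:2207.01385 — 2 statements merged into one kernel-verified Lean document; each statement's English description precedes it below -/
import Mathlib

section
/- Let $1<p,q<\infty$, $\mu\in A_{p,p}$, $\lambda\in A_{q,q}$, and set $s=s(p,q)=1+\frac{1/q+1/p'}{1/p+1/q'}$. Then $(\mu/\lambda)^{1/2}=\nu^{1/s}$ where $\nu=(\mu/\lambda)^{1/(1/p+1/q')}$, and $[(\mu/\lambda)^{1/2}]_{A_{s,s}} \le ([\mu]_{A_{p,p}}[\lambda]_{A_{q,q}})^{1/2}$; in particular $\nu\in A_s \subset A_\infty$. -/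
open MeasureTheory

noncomputable def Cube (d : ℕ) (c : Fin d → ℝ) (l : ℝ) : Set (Fin d → ℝ) :=
  Set.univ.pi fun i => Set.Icc (c i) (c i + l)

noncomputable def avg (d : ℕ) (f : (Fin d → ℝ) → ℝ) (Q : Set (Fin d → ℝ)) : ℝ :=
  (∫ x in Q, f x) / (volume Q).toReal

/-- conjugate exponent -/
noncomputable def conj (p : ℝ) : ℝ := p / (p - 1)

/-!
Write `w = (μ/λ)^{1/2}` and `a = 1/p + 1/q'`, `b = 1/q + 1/p'`, so that `a + b = 2`, `s = 2/a` and
`s' = 2/b`. Then `w^s = (μ^p)^θ (λ^{-q'})^{1-θ}` with `θ = (1/p)/a`, and Hölder's inequality with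
exponents `1/θ`, `1/(1-θ)` gives `⟨w^s⟩^a ≤ ⟨μ^p⟩^{1/p} ⟨λ^{-q'}⟩^{1/q'}`; symmetrically
`⟨w^{-s'}⟩^b ≤ ⟨λ^q⟩^{1/q} ⟨μ^{-p'}⟩^{1/p'}`. The product of the two left sides is the square of the
`A_{s,s}` quantity of `w`, and the product of the right sides is that of `μ` times that of `λ`.
Finally `ν = w^s`, whose `A_s` quantity is the `s`-th power of the `A_{s,s}` quantity of `w`.
-/

lemma memLp_rpow_of_integrable {α : Type*} [MeasurableSpace α] {ν : Measure α}
    {u : α → ℝ} (hu : ∀ x, 0 ≤ u x) (hui : Integrable u ν) {θ : ℝ} (hθ : 0 < θ) :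
    MemLp (fun x => u x ^ θ) (ENNReal.ofReal (1 / θ)) ν := by
  have hmeas : AEStronglyMeasurable (fun x => u x ^ θ) ν :=
    (hui.aemeasurable.pow_const θ).aestronglyMeasurable
  refine (integrable_norm_rpow_iff hmeas (by simpa using hθ) ENNReal.ofReal_ne_top).mp ?_
  refine hui.congr (Filter.Eventually.of_forall fun x => ?_)
  dsimp only
  rw [Real.norm_of_nonneg (Real.rpow_nonneg (hu x) θ), ENNReal.toReal_ofReal (by positivity),
    ← Real.rpow_mul (hu x), mul_one_div_cancel hθ.ne', Real.rpow_one]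

lemma avg_nonneg {d : ℕ} {f : (Fin d → ℝ) → ℝ} {Q : Set (Fin d → ℝ)} (hf : ∀ x, 0 ≤ f x) :
    0 ≤ avg d f Q :=
  div_nonneg (integral_nonneg hf) ENNReal.toReal_nonneg

lemma avg_rpow_mul_rpow_le {d : ℕ} {Q : Set (Fin d → ℝ)} {u v : (Fin d → ℝ) → ℝ}
    (hu : ∀ x, 0 ≤ u x) (hv : ∀ x, 0 ≤ v x) (hui : IntegrableOn u Q) (hvi : IntegrableOn v Q)
    {θ : ℝ} (hθ₀ : 0 < θ) (hθ₁ : θ < 1) :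
    avg d (fun x => u x ^ θ * v x ^ (1 - θ)) Q ≤ avg d u Q ^ θ * avg d v Q ^ (1 - θ) := by
  rcases (ENNReal.toReal_nonneg (a := volume Q)).eq_or_lt with hV | hV
  · rw [avg, ← hV, div_zero]
    exact mul_nonneg (Real.rpow_nonneg (avg_nonneg hu) _) (Real.rpow_nonneg (avg_nonneg hv) _)
  have hθ₁' : 0 < 1 - θ := sub_pos.2 hθ₁
  have hHolder := integral_mul_le_Lp_mul_Lq_of_nonneg
    (Real.holderConjugate_one_div hθ₀ hθ₁' (add_sub_cancel θ 1))
    (Filter.Eventually.of_forall fun x => Real.rpow_nonneg (hu x) θ)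
    (Filter.Eventually.of_forall fun x => Real.rpow_nonneg (hv x) (1 - θ))
    (memLp_rpow_of_integrable hu hui hθ₀) (memLp_rpow_of_integrable hv hvi hθ₁')
  simp only [← Real.rpow_mul (hu _), ← Real.rpow_mul (hv _), mul_one_div_cancel hθ₀.ne',
    mul_one_div_cancel hθ₁'.ne', Real.rpow_one, one_div_one_div] at hHolder
  have hVsplit : (volume Q).toReal = (volume Q).toReal ^ θ * (volume Q).toReal ^ (1 - θ) := by
    rw [← Real.rpow_add hV, add_sub_cancel, Real.rpow_one]
  rw [avg, avg, avg, Real.div_rpow (integral_nonneg hu) hV.le,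
    Real.div_rpow (integral_nonneg hv) hV.le, div_mul_div_comm, ← hVsplit]
  exact div_le_div_of_nonneg_right hHolder hV.le

lemma div_rpow_inv_add_eq {m l P R : ℝ} (hm : 0 < m) (hl : 0 < l) (hP : 0 < P) (hR : 0 < R) :
    (m / l) ^ (1 / P + 1 / R)⁻¹ = (m ^ P) ^ (1 / P / (1 / P + 1 / R)) *
      (l ^ (-R)) ^ (1 - 1 / P / (1 / P + 1 / R)) := by
  have hPR : 0 < 1 / P + 1 / R := by positivity
  rw [← Real.rpow_mul hm.le, ← Real.rpow_mul hl.le, Real.div_rpow hm.le hl.le, div_eq_mul_inv,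
    ← Real.rpow_neg hl.le]
  congr 2
  · field_simp
  · field_simp
    ring

lemma avg_div_rpow_le {d : ℕ} {Q : Set (Fin d → ℝ)} {m l : (Fin d → ℝ) → ℝ}
    (hm : ∀ x, 0 < m x) (hl : ∀ x, 0 < l x) {P R : ℝ} (hP : 0 < P) (hR : 0 < R)
    (hmi : IntegrableOn (fun x => m x ^ P) Q) (hli : IntegrableOn (fun x => l x ^ (-R)) Q) :
    avg d (fun x => (m x / l x) ^ (1 / P + 1 / R)⁻¹) Q ^ (1 / P + 1 / R) ≤
      avg d (fun x => m x ^ P) Q ^ (1 / P) * avg d (fun x => l x ^ (-R)) Q ^ (1 / R) := by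
  have hPR : 0 < 1 / P + 1 / R := by positivity
  have hA := avg_nonneg (d := d) (Q := Q) fun x => Real.rpow_nonneg (hm x).le P
  have hB := avg_nonneg (d := d) (Q := Q) fun x => Real.rpow_nonneg (hl x).le (-R)
  simp only [div_rpow_inv_add_eq (hm _) (hl _) hP hR]
  calc _ ≤ (avg d (fun x => m x ^ P) Q ^ (1 / P / (1 / P + 1 / R)) *
          avg d (fun x => l x ^ (-R)) Q ^ (1 - 1 / P / (1 / P + 1 / R))) ^ (1 / P + 1 / R) :=
        Real.rpow_le_rpow (avg_nonneg fun x => mul_nonneg (Real.rpow_nonneg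
            (Real.rpow_nonneg (hm x).le P) _) (Real.rpow_nonneg (Real.rpow_nonneg (hl x).le _) _))
          (avg_rpow_mul_rpow_le (fun x => Real.rpow_nonneg (hm x).le P)
            (fun x => Real.rpow_nonneg (hl x).le (-R)) hmi hli (by positivity)
            (by rw [div_lt_one hPR]; linarith [one_div_pos.2 hR]))
          hPR.le
    _ = _ := by
      rw [Real.mul_rpow (Real.rpow_nonneg hA _) (Real.rpow_nonneg hB _), ← Real.rpow_mul hA,
        ← Real.rpow_mul hB]
      congr 2
      · field_simp
      · field_simp
        ring

lemma conj_pos {p : ℝ} (hp : 1 < p) : 0 < conj p :=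
  div_pos (zero_lt_one.trans hp) (sub_pos.2 hp)

lemma one_div_conj {p : ℝ} (hp : 1 < p) : 1 / conj p = 1 - 1 / p := by
  have : p - 1 ≠ 0 := by linarith
  rw [conj]
  field_simp

lemma one_div_add_one_div_conj_pos {p q : ℝ} (hp : 0 < p) (hq : 1 < q) :
    0 < 1 / p + 1 / conj q := by
  rw [one_div_conj hq]
  have : 1 / q < 1 := by rw [div_lt_one (by linarith)]; exact hq
  linarith [one_div_pos.2 hp]

lemma one_div_add_one_div_conj_add_swap {p q : ℝ} (hp : 1 < p) (hq : 1 < q) :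
    1 / p + 1 / conj q + (1 / q + 1 / conj p) = 2 := by
  rw [one_div_conj hp, one_div_conj hq]
  ring

lemma conj_two_div {a b : ℝ} (ha : a ≠ 0) (hb : b ≠ 0) (hab : a + b = 2) :
    conj (2 / a) = 2 / b := by
  obtain rfl : b = 2 - a := by linarith
  have : 2 - a ≠ 0 := hb
  rw [conj]
  field_simp

noncomputable def muckenhouptChar (d : ℕ) (r : ℝ) (w : (Fin d → ℝ) → ℝ) (Q : Set (Fin d → ℝ)) : ℝ :=
  avg d (fun x => w x ^ r) Q ^ (1 / r) * avg d (fun x => w x ^ (-(conj r))) Q ^ (1 / conj r)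

lemma muckenhouptChar_nonneg {d : ℕ} {r : ℝ} {w : (Fin d → ℝ) → ℝ} {Q : Set (Fin d → ℝ)}
    (hw : ∀ x, 0 ≤ w x) : 0 ≤ muckenhouptChar d r w Q :=
  mul_nonneg (Real.rpow_nonneg (avg_nonneg fun x => Real.rpow_nonneg (hw x) _) _)
    (Real.rpow_nonneg (avg_nonneg fun x => Real.rpow_nonneg (hw x) _) _)

lemma avg_mul_avg_rpow_eq_muckenhouptChar_rpow {d : ℕ} {r : ℝ} {w : (Fin d → ℝ) → ℝ}
    {Q : Set (Fin d → ℝ)} (hw : ∀ x, 0 ≤ w x) (hr : 1 < r) :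
    avg d (fun x => w x ^ r) Q * avg d (fun x => (w x ^ r) ^ (-(1 / (r - 1)))) Q ^ (r - 1) =
      muckenhouptChar d r w Q ^ r := by
  have hr₁ : r - 1 ≠ 0 := by linarith
  have hA := avg_nonneg (d := d) (Q := Q) fun x => Real.rpow_nonneg (hw x) r
  have hB := avg_nonneg (d := d) (Q := Q) fun x => Real.rpow_nonneg (hw x) (-(conj r))
  have hexp : r * -(1 / (r - 1)) = -(conj r) := by rw [conj]; ring
  simp only [← Real.rpow_mul (hw _), hexp]
  rw [muckenhouptChar, Real.mul_rpow (Real.rpow_nonneg hA _) (Real.rpow_nonneg hB _),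
    ← Real.rpow_mul hA, ← Real.rpow_mul hB, one_div_mul_cancel (by linarith), Real.rpow_one]
  congr 2
  rw [conj]
  field_simp

lemma muckenhouptChar_sqrt_div_le {d : ℕ} {Q : Set (Fin d → ℝ)} {p q : ℝ} (hp : 1 < p)
    (hq : 1 < q) {μ lam : (Fin d → ℝ) → ℝ} (hμ : ∀ x, 0 < μ x) (hlam : ∀ x, 0 < lam x)
    (hμp : IntegrableOn (fun x => μ x ^ p) Q)
    (hμp' : IntegrableOn (fun x => μ x ^ (-(conj p))) Q)
    (hlamq : IntegrableOn (fun x => lam x ^ q) Q)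
    (hlamq' : IntegrableOn (fun x => lam x ^ (-(conj q))) Q) :
    muckenhouptChar d (2 / (1 / p + 1 / conj q)) (fun x => (μ x / lam x) ^ ((1 : ℝ) / 2)) Q ≤
      (muckenhouptChar d p μ Q * muckenhouptChar d q lam Q) ^ ((1 : ℝ) / 2) := by
  have ha := one_div_add_one_div_conj_pos (zero_lt_one.trans hp) hq
  have hb := one_div_add_one_div_conj_pos (zero_lt_one.trans hq) hp
  have hab := one_div_add_one_div_conj_add_swap hp hq
  set a := 1 / p + 1 / conj q
  set b := 1 / q + 1 / conj p
  have hdiv : ∀ x, 0 < μ x / lam x := fun x => div_pos (hμ x) (hlam x)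
  have hw : ∀ x, ((μ x / lam x) ^ ((1 : ℝ) / 2)) ^ (2 / a) = (μ x / lam x) ^ a⁻¹ := fun x => by
    rw [← Real.rpow_mul (hdiv x).le]
    congr 1
    field_simp
  have hw' : ∀ x, ((μ x / lam x) ^ ((1 : ℝ) / 2)) ^ (-(2 / b)) = (lam x / μ x) ^ b⁻¹ :=
    fun x => by
      rw [← Real.rpow_mul (hdiv x).le, show (1 : ℝ) / 2 * -(2 / b) = -b⁻¹ by field_simp,
        Real.rpow_neg (hdiv x).le, ← Real.inv_rpow (hdiv x).le, inv_div]
  have hμlam := avg_div_rpow_le (Q := Q) hμ hlam (zero_lt_one.trans hp) (conj_pos hq) hμp hlamq'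
  have hlamμ := avg_div_rpow_le (Q := Q) hlam hμ (zero_lt_one.trans hq) (conj_pos hp) hlamq hμp'
  set X := avg d (fun x => (μ x / lam x) ^ a⁻¹) Q
  set Y := avg d (fun x => (lam x / μ x) ^ b⁻¹) Q
  have hX : 0 ≤ X := avg_nonneg fun x => (Real.rpow_pos_of_pos (hdiv x) _).le
  have hY : 0 ≤ Y := avg_nonneg fun x => (Real.rpow_pos_of_pos (div_pos (hlam x) (hμ x)) _).le
  calc muckenhouptChar d (2 / a) (fun x => (μ x / lam x) ^ ((1 : ℝ) / 2)) Q
      = (X ^ a * Y ^ b) ^ ((1 : ℝ) / 2) := by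
        rw [muckenhouptChar, conj_two_div ha.ne' hb.ne' hab]
        simp only [hw, hw']
        rw [Real.mul_rpow (Real.rpow_nonneg hX _) (Real.rpow_nonneg hY _), ← Real.rpow_mul hX,
          ← Real.rpow_mul hY]
        congr 2 <;> field_simp
    _ ≤ _ := by
      refine Real.rpow_le_rpow (by positivity) ?_ (by norm_num)
      calc X ^ a * Y ^ b ≤ _ := mul_le_mul hμlam hlamμ (by positivity)
            (mul_nonneg (Real.rpow_nonneg (avg_nonneg fun x => Real.rpow_nonneg (hμ x).le _) _)
              (Real.rpow_nonneg (avg_nonneg fun x => Real.rpow_nonneg (hlam x).le _) _))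
        _ = _ := by rw [muckenhouptChar, muckenhouptChar]; ring

theorem stmt2_general (d : ℕ) (p q : ℝ) (hp : 1 < p) (hq : 1 < q)
    (μ lam : (Fin d → ℝ) → ℝ) (hμpos : ∀ x, 0 < μ x) (hlampos : ∀ x, 0 < lam x)
    (hμp : ∀ (c : Fin d → ℝ) (l : ℝ), 0 < l →
      IntegrableOn (fun x => μ x ^ p) (Cube d c l) volume)
    (hμp' : ∀ (c : Fin d → ℝ) (l : ℝ), 0 < l →
      IntegrableOn (fun x => μ x ^ (-(conj p))) (Cube d c l) volume)
    (hlamq : ∀ (c : Fin d → ℝ) (l : ℝ), 0 < l →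
      IntegrableOn (fun x => lam x ^ q) (Cube d c l) volume)
    (hlamq' : ∀ (c : Fin d → ℝ) (l : ℝ), 0 < l →
      IntegrableOn (fun x => lam x ^ (-(conj q))) (Cube d c l) volume)
    (Cμ Clam : ℝ)
    (hAμ : ∀ (c : Fin d → ℝ) (l : ℝ), 0 < l →
      avg d (fun x => μ x ^ p) (Cube d c l) ^ (1 / p) *
        avg d (fun x => μ x ^ (-(conj p))) (Cube d c l) ^ (1 / conj p) ≤ Cμ)
    (hAlam : ∀ (c : Fin d → ℝ) (l : ℝ), 0 < l →
      avg d (fun x => lam x ^ q) (Cube d c l) ^ (1 / q) *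
        avg d (fun x => lam x ^ (-(conj q))) (Cube d c l) ^ (1 / conj q) ≤ Clam)
    (s : ℝ) (hs : s = 1 + (1 / q + 1 / conj p) / (1 / p + 1 / conj q)) :
    (∀ x, (μ x / lam x) ^ ((1 : ℝ) / 2)
        = ((μ x / lam x) ^ ((1 / p + 1 / conj q)⁻¹)) ^ s⁻¹) ∧
    (∀ (c : Fin d → ℝ) (l : ℝ), 0 < l →
      avg d (fun x => ((μ x / lam x) ^ ((1 : ℝ) / 2)) ^ s) (Cube d c l) ^ (1 / s) *
        avg d (fun x => ((μ x / lam x) ^ ((1 : ℝ) / 2)) ^ (-(conj s))) (Cube d c l)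
          ^ (1 / conj s)
        ≤ (Cμ * Clam) ^ ((1 : ℝ) / 2)) ∧
    (∀ (c : Fin d → ℝ) (l : ℝ), 0 < l →
      avg d (fun x => (μ x / lam x) ^ ((1 / p + 1 / conj q)⁻¹)) (Cube d c l) *
        avg d (fun x => ((μ x / lam x) ^ ((1 / p + 1 / conj q)⁻¹)) ^ (-(1 / (s - 1))))
          (Cube d c l) ^ (s - 1)
        ≤ (Cμ * Clam) ^ ((1 / p + 1 / conj q)⁻¹)) := by
  have ha := one_div_add_one_div_conj_pos (zero_lt_one.trans hp) hq
  have hb := one_div_add_one_div_conj_pos (zero_lt_one.trans hq) hp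
  have hab := one_div_add_one_div_conj_add_swap hp hq
  set a := 1 / p + 1 / conj q
  obtain rfl : s = 2 / a := by
    rw [hs, eq_div_iff ha.ne', add_mul, div_mul_cancel₀ _ ha.ne']
    linarith
  have hexp : (1 : ℝ) / 2 * (2 / a) = a⁻¹ := by field_simp
  have hdiv : ∀ x, 0 ≤ μ x / lam x := fun x => (div_pos (hμpos x) (hlampos x)).le
  have hsqrt : ∀ x, 0 ≤ (μ x / lam x) ^ ((1 : ℝ) / 2) := fun x => Real.rpow_nonneg (hdiv x) _
  have hν : ∀ x, ((μ x / lam x) ^ ((1 : ℝ) / 2)) ^ (2 / a) = (μ x / lam x) ^ a⁻¹ := fun x => by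
    rw [← Real.rpow_mul (hdiv x), hexp]
  have hχμ := fun Q => muckenhouptChar_nonneg (d := d) (r := p) (Q := Q) fun x => (hμpos x).le
  have hχlam := fun Q => muckenhouptChar_nonneg (d := d) (r := q) (Q := Q) fun x => (hlampos x).le
  have hCC : 0 ≤ Cμ * Clam :=
    mul_nonneg ((hχμ _).trans (hAμ 0 1 one_pos)) ((hχlam _).trans (hAlam 0 1 one_pos))
  have hchar : ∀ c l, 0 < l → muckenhouptChar d (2 / a) (fun x => (μ x / lam x) ^ ((1 : ℝ) / 2))
      (Cube d c l) ≤ (Cμ * Clam) ^ ((1 : ℝ) / 2) := fun c l hl =>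
    (muckenhouptChar_sqrt_div_le hp hq hμpos hlampos (hμp c l hl) (hμp' c l hl) (hlamq c l hl)
      (hlamq' c l hl)).trans <| Real.rpow_le_rpow (mul_nonneg (hχμ _) (hχlam _))
        (mul_le_mul (hAμ c l hl) (hAlam c l hl) (hχlam _) ((hχμ _).trans (hAμ c l hl)))
        (by norm_num)
  refine ⟨fun x => by rw [← hν, Real.rpow_rpow_inv (hsqrt x) (by positivity)], hchar,
    fun c l hl => ?_⟩
  simp only [← hν]
  rw [avg_mul_avg_rpow_eq_muckenhouptChar_rpow hsqrt ((one_lt_div ha).2 (by linarith)), ← hexp,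
    Real.rpow_mul hCC]
  exact Real.rpow_le_rpow (muckenhouptChar_nonneg hsqrt) (hchar c l hl) (by positivity)

/-- With `s = s(p,q) = 1 + (1/q+1/p')/(1/p+1/q')`, one has the pointwise
identity `(μ/λ)^{1/2} = ν^{1/s}` where `ν = (μ/λ)^{1/(1/p+1/q')}`, the characteristic
bound `[(μ/λ)^{1/2}]_{A_{s,s}} ≤ ([μ]_{A_{p,p}}[λ]_{A_{q,q}})^{1/2}`, and in particular
`ν ∈ A_s` with `[ν]_{A_s} ≤ ([μ]_{A_{p,p}}[λ]_{A_{q,q}})^{1/(1/p+1/q')}`. -/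
theorem stmt2 (d : ℕ) (hd : 0 < d) (p q : ℝ) (hp : 1 < p) (hq : 1 < q)
    (μ lam : (Fin d → ℝ) → ℝ) (hμpos : ∀ x, 0 < μ x) (hlampos : ∀ x, 0 < lam x)
    (hμp : ∀ (c : Fin d → ℝ) (l : ℝ), 0 < l →
      IntegrableOn (fun x => μ x ^ p) (Cube d c l) volume)
    (hμp' : ∀ (c : Fin d → ℝ) (l : ℝ), 0 < l →
      IntegrableOn (fun x => μ x ^ (-(conj p))) (Cube d c l) volume)
    (hlamq : ∀ (c : Fin d → ℝ) (l : ℝ), 0 < l →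
      IntegrableOn (fun x => lam x ^ q) (Cube d c l) volume)
    (hlamq' : ∀ (c : Fin d → ℝ) (l : ℝ), 0 < l →
      IntegrableOn (fun x => lam x ^ (-(conj q))) (Cube d c l) volume)
    (Cμ Clam : ℝ) (hCμ : 0 < Cμ) (hClam : 0 < Clam)
    (hAμ : ∀ (c : Fin d → ℝ) (l : ℝ), 0 < l →
      avg d (fun x => μ x ^ p) (Cube d c l) ^ (1 / p) *
        avg d (fun x => μ x ^ (-(conj p))) (Cube d c l) ^ (1 / conj p) ≤ Cμ)
    (hAlam : ∀ (c : Fin d → ℝ) (l : ℝ), 0 < l →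
      avg d (fun x => lam x ^ q) (Cube d c l) ^ (1 / q) *
        avg d (fun x => lam x ^ (-(conj q))) (Cube d c l) ^ (1 / conj q) ≤ Clam)
    (s : ℝ) (hs : s = 1 + (1 / q + 1 / conj p) / (1 / p + 1 / conj q)) :
    (∀ x, (μ x / lam x) ^ ((1 : ℝ) / 2)
        = ((μ x / lam x) ^ ((1 / p + 1 / conj q)⁻¹)) ^ s⁻¹) ∧
    (∀ (c : Fin d → ℝ) (l : ℝ), 0 < l →
      avg d (fun x => ((μ x / lam x) ^ ((1 : ℝ) / 2)) ^ s) (Cube d c l) ^ (1 / s) *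
        avg d (fun x => ((μ x / lam x) ^ ((1 : ℝ) / 2)) ^ (-(conj s))) (Cube d c l)
          ^ (1 / conj s)
        ≤ (Cμ * Clam) ^ ((1 : ℝ) / 2)) ∧
    (∀ (c : Fin d → ℝ) (l : ℝ), 0 < l →
      avg d (fun x => (μ x / lam x) ^ ((1 / p + 1 / conj q)⁻¹)) (Cube d c l) *
        avg d (fun x => ((μ x / lam x) ^ ((1 / p + 1 / conj q)⁻¹)) ^ (-(1 / (s - 1))))
          (Cube d c l) ^ (s - 1)
        ≤ (Cμ * Clam) ^ ((1 / p + 1 / conj q)⁻¹)) :=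
  stmt2_general d p q hp hq μ lam hμpos hlampos hμp hμp' hlamq hlamq' Cμ Clam hAμ hAlam s hs
end

section
/- Let $\nu\in A_\infty$, so that there exist $C,\delta>0$ with $\nu(E)/\nu(Q)\le C(|E|/|Q|)^\delta$ for all cubes $Q$ and measurable $E\subset Q$. Let $\beta>0$ and let $Q_0=R_0\subset R_1\subset\cdots\subset R_m=P$ be nested cubes with $|R_{j+1}|\sim 2^d|R_j|$. Then $\sum_{j=0}^m\frac{|Q_0|}{|R_j|}\Big(\frac{\nu(R_j)}{\nu(P)}\Big)^\beta \lesssim \sum_{j=0}^m 2^{-\max\{j,m-j\}\min(1,\delta\beta)d}$, and in particular this sum tends to $0$ as $m\to\infty$. -/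
open MeasureTheory Filter
open scoped ENNReal

lemma cube_meas (d : ℕ) (c : Fin d → ℝ) (l : ℝ) : MeasurableSet (Cube d c l) :=
  MeasurableSet.univ_pi fun _ => measurableSet_Icc

lemma cube_vol (d : ℕ) (c : Fin d → ℝ) (l : ℝ) :
    volume (Cube d c l) = ENNReal.ofReal l ^ d := by
  rw [Cube, volume_pi_pi]
  simp [Real.volume_Icc, Finset.prod_const]

lemma cube_vol_toReal (d : ℕ) (c : Fin d → ℝ) {l : ℝ} (hl : 0 ≤ l) :
    (volume (Cube d c l)).toReal = l ^ d := by
  rw [cube_vol, ENNReal.toReal_pow, ENNReal.toReal_ofReal hl]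

/-- For `ν ∈ A_∞` (with constants `C, δ`), `β > 0`, and a nested chain
of cubes `Q_0 = R_0 ⊆ R_1 ⊆ ⋯ ⊆ R_m = P` with `|R_{j+1}| ∼ 2^d |R_j|`, one has
`∑_{j=0}^m (|Q_0|/|R_j|) (ν(R_j)/ν(P))^β ≲ ∑_{j=0}^m 2^{-max(j,m-j)·min(1,δβ)·d}`,
and the right-hand sum tends to `0` as `m → ∞`. -/
theorem stmt14 (d : ℕ) (hd : 0 < d) (β : ℝ) (hβ : 0 < β)
    (ν : (Fin d → ℝ) → ℝ) (hνpos : ∀ x, 0 < ν x) (hνloc : LocallyIntegrable ν volume)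
    (C δ : ℝ) (hC : 0 < C) (hδ : 0 < δ)
    (hAinf : ∀ (c : Fin d → ℝ) (l : ℝ), 0 < l →
      ∀ E : Set (Fin d → ℝ), MeasurableSet E → E ⊆ Cube d c l →
        (∫ x in E, ν x) / (∫ x in Cube d c l, ν x)
          ≤ C * ((volume E).toReal / (volume (Cube d c l)).toReal) ^ δ) :
    (∃ K > (0 : ℝ), ∀ (m : ℕ) (cen : ℕ → Fin d → ℝ) (len : ℕ → ℝ),
      (∀ j, 0 < len j) →
      (∀ j, Cube d (cen j) (len j) ⊆ Cube d (cen (j + 1)) (len (j + 1))) →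
      (∀ j, (2 : ℝ≥0∞) ^ d * volume (Cube d (cen j) (len j))
              ≤ volume (Cube d (cen (j + 1)) (len (j + 1))) ∧
            volume (Cube d (cen (j + 1)) (len (j + 1)))
              ≤ (4 : ℝ≥0∞) ^ d * volume (Cube d (cen j) (len j))) →
      ∑ j ∈ Finset.range (m + 1),
          ((volume (Cube d (cen 0) (len 0))).toReal /
              (volume (Cube d (cen j) (len j))).toReal) *
            ((∫ x in Cube d (cen j) (len j), ν x) /
                (∫ x in Cube d (cen m) (len m), ν x)) ^ β
        ≤ K * ∑ j ∈ Finset.range (m + 1),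
            (2 : ℝ) ^ (-(max (j : ℝ) ((m : ℝ) - j)) * min 1 (δ * β) * (d : ℝ))) ∧
    Tendsto (fun m : ℕ => ∑ j ∈ Finset.range (m + 1),
        (2 : ℝ) ^ (-(max (j : ℝ) ((m : ℝ) - j)) * min 1 (δ * β) * (d : ℝ)))
      atTop (nhds 0) := by
  set θ : ℝ := min 1 (δ * β) with hθdef
  have hθpos : 0 < θ := lt_min one_pos (mul_pos hδ hβ)
  have hθ1 : θ ≤ 1 := min_le_left _ _
  have hθδβ : θ ≤ δ * β := min_le_right _ _
  have hdpos : (0:ℝ) < d := Nat.cast_pos.mpr hd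
  constructor
  · refine ⟨C ^ β, Real.rpow_pos_of_pos hC β, ?_⟩
    intro m cen len hlen hsub hgrow
    set V : ℕ → ℝ := fun j => (volume (Cube d (cen j) (len j))).toReal with hVdef
    have hVpos : ∀ j, 0 < V j := fun j => by
      rw [hVdef]; simp only
      rw [cube_vol_toReal d _ (hlen j).le]
      exact pow_pos (hlen j) d
    have hstep : ∀ j, 2 ^ d * V j ≤ V (j + 1) := by
      intro j
      have h := (hgrow j).1
      have hfin : volume (Cube d (cen (j+1)) (len (j+1))) ≠ ⊤ := by
        rw [cube_vol]; exact ENNReal.pow_ne_top ENNReal.ofReal_ne_top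
      have h2 : ((2:ℝ≥0∞) ^ d * volume (Cube d (cen j) (len j))).toReal
          = 2 ^ d * V j := by
        rw [ENNReal.toReal_mul, ENNReal.toReal_pow]
        norm_num [hVdef]
      calc (2:ℝ) ^ d * V j = _ := h2.symm
        _ ≤ V (j + 1) := ENNReal.toReal_mono hfin h
    have hgrowth : ∀ j k, 2 ^ (k * d) * V j ≤ V (j + k) := by
      intro j k
      induction k with
      | zero => simp
      | succ k ih =>
        have he : (2:ℝ) ^ ((k+1) * d) * V j = 2 ^ d * (2 ^ (k * d) * V j) := by
          rw [add_mul, one_mul, pow_add]; ring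
        rw [he, show j + (k+1) = (j + k) + 1 from rfl]
        calc (2:ℝ) ^ d * (2 ^ (k * d) * V j)
            ≤ 2 ^ d * V (j + k) :=
              mul_le_mul_of_nonneg_left ih (by positivity)
          _ ≤ V (j + k + 1) := hstep (j + k)
    have hsubch : ∀ j k, Cube d (cen j) (len j) ⊆ Cube d (cen (j+k)) (len (j+k)) := by
      intro j k
      induction k with
      | zero => exact subset_rfl
      | succ k ih => exact ih.trans (hsub (j + k))
    rw [Finset.mul_sum]
    apply Finset.sum_le_sum
    intro j hj
    have hjm : j ≤ m := Nat.lt_succ_iff.mp (Finset.mem_range.mp hj)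
    set x : ℝ := (j : ℝ) with hxdef
    set y : ℝ := (m : ℝ) - (j : ℝ) with hydef
    have hx : 0 ≤ x := Nat.cast_nonneg j
    have hy : 0 ≤ y := by rw [hydef]; simp; exact_mod_cast hjm
    have hcast1 : ((2:ℝ) ^ (j * d))⁻¹ = (2:ℝ) ^ (-(x * (d:ℝ))) := by
      rw [Real.rpow_neg (by norm_num : (0:ℝ) ≤ 2)]
      congr 1
      rw [← Real.rpow_natCast 2 (j * d)]
      congr 1
      push_cast; ring
    have hcast2 : ((2:ℝ) ^ ((m - j) * d))⁻¹ = (2:ℝ) ^ (-(y * (d:ℝ))) := by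
      rw [Real.rpow_neg (by norm_num : (0:ℝ) ≤ 2)]
      congr 1
      rw [← Real.rpow_natCast 2 ((m - j) * d)]
      congr 1
      push_cast [Nat.cast_sub hjm]; ring
    have h1 : V 0 / V j ≤ (2:ℝ) ^ (-(x * (d:ℝ))) := by
      rw [← hcast1, div_le_iff₀ (hVpos j), inv_mul_eq_div, le_div_iff₀ (by positivity)]
      have := hgrowth 0 j
      rw [zero_add] at this
      linarith [this, mul_comm (V 0) ((2:ℝ) ^ (j * d))]
    have h2 : V j / V m ≤ (2:ℝ) ^ (-(y * (d:ℝ))) := by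
      rw [← hcast2, div_le_iff₀ (hVpos m), inv_mul_eq_div, le_div_iff₀ (by positivity)]
      have := hgrowth j (m - j)
      rw [Nat.add_sub_cancel' hjm] at this
      linarith [this, mul_comm (V j) ((2:ℝ) ^ ((m - j) * d))]
    have hsubjm : Cube d (cen j) (len j) ⊆ Cube d (cen m) (len m) := by
      have := hsubch j (m - j)
      rwa [Nat.add_sub_cancel' hjm] at this
    set r : ℝ := (∫ z in Cube d (cen j) (len j), ν z) /
        (∫ z in Cube d (cen m) (len m), ν z) with hrdef
    have hr0 : 0 ≤ r :=
      div_nonneg (setIntegral_nonneg (cube_meas _ _ _) fun z _ => (hνpos z).le)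
        (setIntegral_nonneg (cube_meas _ _ _) fun z _ => (hνpos z).le)
    have hr : r ≤ C * (V j / V m) ^ δ :=
      hAinf (cen m) (len m) (hlen m) _ (cube_meas _ _ _) hsubjm
    have hVdm0 : 0 ≤ V j / V m := div_nonneg (hVpos j).le (hVpos m).le
    have hrβ : r ^ β ≤ C ^ β * (2:ℝ) ^ (-(y * (d:ℝ)) * (δ * β)) := by
      calc r ^ β ≤ (C * (V j / V m) ^ δ) ^ β := Real.rpow_le_rpow hr0 hr hβ.le
        _ ≤ (C * ((2:ℝ) ^ (-(y * (d:ℝ)))) ^ δ) ^ β := by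
            apply Real.rpow_le_rpow (by positivity) _ hβ.le
            exact mul_le_mul_of_nonneg_left
              (Real.rpow_le_rpow hVdm0 h2 hδ.le) hC.le
        _ = C ^ β * (2:ℝ) ^ (-(y * (d:ℝ)) * (δ * β)) := by
            rw [Real.mul_rpow hC.le (by positivity),
              ← Real.rpow_mul (by norm_num : (0:ℝ) ≤ 2),
              ← Real.rpow_mul (by norm_num : (0:ℝ) ≤ 2)]
            ring_nf
    calc V 0 / V j * r ^ β
        ≤ (2:ℝ) ^ (-(x * (d:ℝ))) * (C ^ β * (2:ℝ) ^ (-(y * (d:ℝ)) * (δ * β))) := by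
          apply mul_le_mul h1 hrβ (by positivity) (by positivity)
      _ = C ^ β * (2:ℝ) ^ (-(x * (d:ℝ)) + -(y * (d:ℝ)) * (δ * β)) := by
          rw [Real.rpow_add (by norm_num : (0:ℝ) < 2)]; ring
      _ ≤ C ^ β * (2:ℝ) ^ (-(max x y) * θ * (d:ℝ)) := by
          apply mul_le_mul_of_nonneg_left _ (by positivity)
          apply Real.rpow_le_rpow_of_exponent_le (by norm_num)
          have hmx : (max x y) * (θ * (d:ℝ)) ≤ (x + y) * (θ * (d:ℝ)) :=
            mul_le_mul_of_nonneg_right (max_le_add_of_nonneg hx hy)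
              (mul_nonneg hθpos.le hdpos.le)
          have hxx : x * (θ * (d:ℝ)) ≤ x * (d:ℝ) :=
            mul_le_mul_of_nonneg_left
              (mul_le_of_le_one_left hdpos.le hθ1) hx
          have hyy : y * (θ * (d:ℝ)) ≤ y * ((δ * β) * (d:ℝ)) :=
            mul_le_mul_of_nonneg_left
              (mul_le_mul_of_nonneg_right hθδβ hdpos.le) hy
          nlinarith [hmx, hxx, hyy]
  · have hexp : -(θ * (d:ℝ)) / 2 < 0 := by
      have : 0 < θ * (d:ℝ) := mul_pos hθpos hdpos
      linarith
    set q : ℝ := (2:ℝ) ^ (-(θ * (d:ℝ)) / 2) with hqdef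
    have hq0 : 0 ≤ q := Real.rpow_nonneg (by norm_num) _
    have hq1 : q < 1 := Real.rpow_lt_one_of_one_lt_of_neg one_lt_two hexp
    have hbound : ∀ m : ℕ, (∑ j ∈ Finset.range (m + 1),
        (2:ℝ) ^ (-(max (j : ℝ) ((m : ℝ) - j)) * θ * (d:ℝ))) ≤ ((m:ℝ) + 1) * q ^ m := by
      intro m
      have hterm : ∀ j ∈ Finset.range (m + 1),
          (2:ℝ) ^ (-(max (j : ℝ) ((m : ℝ) - j)) * θ * (d:ℝ)) ≤ q ^ m := by
        intro j hj
        have hjm : j ≤ m := Nat.lt_succ_iff.mp (Finset.mem_range.mp hj)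
        have hq : q ^ m = (2:ℝ) ^ ((-(θ * (d:ℝ)) / 2) * (m:ℝ)) := by
          rw [hqdef, ← Real.rpow_natCast ((2:ℝ) ^ (-(θ * (d:ℝ)) / 2)) m,
            ← Real.rpow_mul (by norm_num : (0:ℝ) ≤ 2)]
        rw [hq]
        apply Real.rpow_le_rpow_of_exponent_le (by norm_num)
        have h1 : (j:ℝ) ≤ max (j:ℝ) ((m:ℝ) - j) := le_max_left _ _
        have h2 : (m:ℝ) - j ≤ max (j:ℝ) ((m:ℝ) - j) := le_max_right _ _
        have h3 : (m:ℝ) ≤ 2 * max (j:ℝ) ((m:ℝ) - j) := by linarith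
        nlinarith [mul_le_mul_of_nonneg_right h3 (mul_nonneg hθpos.le hdpos.le)]
      calc ∑ j ∈ Finset.range (m + 1),
            (2:ℝ) ^ (-(max (j : ℝ) ((m : ℝ) - j)) * θ * (d:ℝ))
          ≤ ∑ _j ∈ Finset.range (m + 1), q ^ m := Finset.sum_le_sum hterm
        _ = ((m:ℝ) + 1) * q ^ m := by
            rw [Finset.sum_const, Finset.card_range, nsmul_eq_mul]
            push_cast; ring
    have hge : ∀ m : ℕ, 0 ≤ ∑ j ∈ Finset.range (m + 1),
        (2:ℝ) ^ (-(max (j : ℝ) ((m : ℝ) - j)) * θ * (d:ℝ)) := fun m =>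
      Finset.sum_nonneg fun j _ => Real.rpow_nonneg (by norm_num) _
    have hlim : Tendsto (fun m : ℕ => ((m:ℝ) + 1) * q ^ m) atTop (nhds 0) := by
      have h1 := tendsto_self_mul_const_pow_of_lt_one hq0 hq1
      have h2 := tendsto_pow_atTop_nhds_zero_of_lt_one hq0 hq1
      have h3 := h1.add h2
      rw [add_zero] at h3
      refine h3.congr fun m => ?_
      ring
    exact squeeze_zero hge hbound hlim
end
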